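/- For (β,μ) in A = {(β,μ): μ>0, |β|<μ}, the negative gradient of f(β,μ) = log(1/(μ+β)+1/(μ-β)) is given by -∇f(β,μ) = (-2β/(μ²-β²), (μ²+β²)/(μ(μ²-β²))), and the map (β,μ) ↦ -∇f(β,μ) is a bijection from A onto A with inverse (m,ρ) ↦ (1/m - (ρ/m)/√(ρ²-m²), 1/√(ρ²-m²)). -/
import Mathlib

/-- The grand canonical entropy `f(β,μ) = log(1/(μ+β)+1/(μ-β))`. -/
noncomputable def fGC (p : ℝ × ℝ) : ℝ := Real.log (1/(p.2 + p.1) + 1/(p.2 - p.1))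

/-- The negative gradient `-∇f(β,μ) = (-2β/(μ²-β²), (μ²+β²)/(μ(μ²-β²)))`. -/
noncomputable def negGradGC (p : ℝ × ℝ) : ℝ × ℝ :=
  (-2 * p.1 / (p.2 ^ 2 - p.1 ^ 2), (p.2 ^ 2 + p.1 ^ 2) / (p.2 * (p.2 ^ 2 - p.1 ^ 2)))

/-- The inverse map `(m,ρ) ↦ (1/m - (ρ/m)/√(ρ²-m²), 1/√(ρ²-m²))`. -/
noncomputable def invGradGC (q : ℝ × ℝ) : ℝ × ℝ :=
  (1/q.1 - (q.2/q.1) / Real.sqrt (q.2 ^ 2 - q.1 ^ 2), 1 / Real.sqrt (q.2 ^ 2 - q.1 ^ 2))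

lemma auxD {β μ : ℝ} (hμ : 0 < μ) (hβ : |β| < μ) :
    0 < μ + β ∧ 0 < μ - β ∧ 0 < μ ^ 2 - β ^ 2 := by
  rw [abs_lt] at hβ
  exact ⟨by linarith [hβ.1], by linarith [hβ.2], by nlinarith [hβ.1, hβ.2]⟩

lemma mapsTo_neg : Set.MapsTo negGradGC {p : ℝ × ℝ | 0 < p.2 ∧ |p.1| < p.2}
    {p : ℝ × ℝ | 0 < p.2 ∧ |p.1| < p.2} := by
  rintro ⟨β, μ⟩ ⟨hμ, hβ⟩
  replace hμ : 0 < μ := hμ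
  replace hβ : |β| < μ := hβ
  obtain ⟨h1, h2, hD⟩ := auxD hμ hβ
  simp only [Set.mem_setOf_eq, negGradGC]
  constructor
  · exact div_pos (by positivity) (by positivity)
  · rw [abs_div, abs_of_pos hD, div_lt_div_iff₀ (by positivity) (by positivity)]
    have h3 : |(-2 : ℝ) * β| = 2 * |β| := by rw [abs_mul]; norm_num
    rw [h3]
    have key : 2 * |β| * μ < μ ^ 2 + β ^ 2 := by
      nlinarith [mul_pos (sub_pos.mpr hβ) (sub_pos.mpr hβ), sq_abs β]
    nlinarith [mul_lt_mul_of_pos_right key hD]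

lemma mapsTo_inv : Set.MapsTo invGradGC {p : ℝ × ℝ | 0 < p.2 ∧ |p.1| < p.2}
    {p : ℝ × ℝ | 0 < p.2 ∧ |p.1| < p.2} := by
  rintro ⟨m, ρ⟩ ⟨hρ, hm⟩
  replace hρ : 0 < ρ := hρ
  replace hm : |m| < ρ := hm
  have hD : 0 < ρ ^ 2 - m ^ 2 := by nlinarith [sq_abs m, abs_nonneg m]
  set s := Real.sqrt (ρ ^ 2 - m ^ 2) with hs
  have hs0 : 0 < s := Real.sqrt_pos.mpr hD
  have hs2 : s ^ 2 = ρ ^ 2 - m ^ 2 := Real.sq_sqrt hD.le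
  refine ⟨?_, ?_⟩
  · show (0:ℝ) < 1/s
    positivity
  · show |1/m - (ρ/m)/s| < 1/s
    rcases eq_or_ne m 0 with rfl | hm0
    · simp only [div_zero, zero_div, sub_zero, abs_zero]
      positivity
    · have hmabs : 0 < |m| := abs_pos.mpr hm0
      have hsρ : s < ρ := by
        have h2 : s ^ 2 < ρ ^ 2 := by nlinarith [sq_abs m, hmabs]
        exact lt_of_pow_lt_pow_left₀ 2 hρ.le h2
      have h1 : 1/m - (ρ/m)/s = (s - ρ)/(m * s) := by field_simp
      rw [h1, abs_div, abs_mul, abs_of_pos hs0, div_lt_div_iff₀ (by positivity) hs0,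
        one_mul]
      have habs : |s - ρ| = ρ - s := by rw [abs_sub_comm]; exact abs_of_pos (by linarith)
      rw [habs]
      nlinarith [sq_abs m, hs2, hsρ, hmabs, hs0]

lemma left_inv : ∀ p ∈ {p : ℝ × ℝ | 0 < p.2 ∧ |p.1| < p.2},
    invGradGC (negGradGC p) = p := by
  rintro ⟨β, μ⟩ ⟨hμ, hβ⟩
  replace hμ : 0 < μ := hμ
  replace hβ : |β| < μ := hβ
  obtain ⟨h1, h2, hD⟩ := auxD hμ hβ
  have hμ' : μ ≠ 0 := hμ.ne'
  have key : ((μ^2 + β^2)/(μ*(μ^2-β^2)))^2 - (-2*β/(μ^2-β^2))^2 = (1/μ)^2 := by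
    field_simp; ring
  have hsqrt : Real.sqrt (((μ^2 + β^2)/(μ*(μ^2-β^2)))^2 - (-2*β/(μ^2-β^2))^2) = 1/μ := by
    rw [key, Real.sqrt_sq (by positivity)]
  simp only [negGradGC, invGradGC, hsqrt, Prod.mk.injEq]
  rcases eq_or_ne β 0 with rfl | hβ0
  · norm_num
  · have hm0 : -2*β/(μ^2-β^2) ≠ 0 := by
      apply div_ne_zero _ hD.ne'
      intro h
      apply hβ0
      nlinarith [h]
    constructor
    · field_simp
      ring
    · field_simp

lemma right_inv : ∀ q ∈ {p : ℝ × ℝ | 0 < p.2 ∧ |p.1| < p.2},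
    negGradGC (invGradGC q) = q := by
  rintro ⟨m, ρ⟩ ⟨hρ, hm⟩
  replace hρ : 0 < ρ := hρ
  replace hm : |m| < ρ := hm
  have hD : 0 < ρ ^ 2 - m ^ 2 := by nlinarith [sq_abs m, abs_nonneg m]
  set s := Real.sqrt (ρ ^ 2 - m ^ 2) with hs
  have hs0 : 0 < s := Real.sqrt_pos.mpr hD
  have hs2 : s ^ 2 = ρ ^ 2 - m ^ 2 := Real.sq_sqrt hD.le
  simp only [negGradGC, invGradGC, ← hs, Prod.mk.injEq]
  rcases eq_or_ne m 0 with rfl | hm0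
  · have hsρ : s = ρ := by
      have : s ^ 2 = ρ ^ 2 := by rw [hs2]; ring
      nlinarith [hs0, hρ]
    rw [hsρ]
    norm_num
    field_simp
  · have hmabs : 0 < |m| := abs_pos.mpr hm0
    have hsρ : s < ρ := by
      have h2 : s ^ 2 < ρ ^ 2 := by nlinarith [sq_abs m, hmabs]
      exact lt_of_pow_lt_pow_left₀ 2 hρ.le h2
    have hm2 : m ^ 2 = ρ ^ 2 - s ^ 2 := by linarith
    have hβ' : 1/m - (ρ/m)/s = (s - ρ)/(m * s) := by field_simp
    rw [hβ']
    have hD' : (1/s)^2 - ((s-ρ)/(m*s))^2 = 2*(ρ-s)/(m^2*s) := by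
      have e1 : (1/s)^2 - ((s-ρ)/(m*s))^2 = (m^2 - (s-ρ)^2)/(m^2*s^2) := by
        field_simp
      rw [e1]
      have e2 : m^2 - (s-ρ)^2 = 2*s*(ρ-s) := by linear_combination hm2
      rw [e2]
      field_simp
    have hρs : 0 < ρ - s := sub_pos.mpr hsρ
    have hden : (0:ℝ) < 2*(ρ-s)/(m^2*s) := div_pos (by linarith) (by positivity)
    constructor
    · rw [hD', div_eq_iff hden.ne']
      field_simp
      ring
    · rw [hD']
      have hnum : (1/s)^2 + ((s-ρ)/(m*s))^2 = 2*ρ*(ρ-s)/(m^2*s^2) := by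
        have e1 : (1/s)^2 + ((s-ρ)/(m*s))^2 = (m^2 + (s-ρ)^2)/(m^2*s^2) := by
          field_simp
        have e2 : m^2 + (s-ρ)^2 = 2*ρ*(ρ-s) := by linear_combination hm2
        rw [e1, e2]
      rw [hnum, div_eq_iff (mul_pos (by positivity : (0:ℝ) < 1/s) hden).ne']
      field_simp

lemma deriv_lem : ∀ p ∈ {p : ℝ × ℝ | 0 < p.2 ∧ |p.1| < p.2},
    HasFDerivAt fGC
      (-(((negGradGC p).1 • ContinuousLinearMap.fst ℝ ℝ ℝ) +
          ((negGradGC p).2 • ContinuousLinearMap.snd ℝ ℝ ℝ))) p := by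
  rintro ⟨β, μ⟩ ⟨hμ, hβ⟩
  replace hμ : 0 < μ := hμ
  replace hβ : |β| < μ := hβ
  obtain ⟨h1, h2, hD⟩ := auxD hμ hβ
  have hu : HasFDerivAt (fun p : ℝ × ℝ => p.2 + p.1)
      (ContinuousLinearMap.snd ℝ ℝ ℝ + ContinuousLinearMap.fst ℝ ℝ ℝ) (β, μ) :=
    hasFDerivAt_snd.add hasFDerivAt_fst
  have hv : HasFDerivAt (fun p : ℝ × ℝ => p.2 - p.1)
      (ContinuousLinearMap.snd ℝ ℝ ℝ - ContinuousLinearMap.fst ℝ ℝ ℝ) (β, μ) :=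
    hasFDerivAt_snd.sub hasFDerivAt_fst
  have hu' := (hasFDerivAt_inv (show (β, μ).2 + (β, μ).1 ≠ 0 from h1.ne')).comp (β, μ) hu
  have hv' := (hasFDerivAt_inv (show (β, μ).2 - (β, μ).1 ≠ 0 from h2.ne')).comp (β, μ) hv
  have hg : ((β, μ).2 + (β, μ).1)⁻¹ + ((β, μ).2 - (β, μ).1)⁻¹ ≠ 0 := by
    have : (0:ℝ) < (μ + β)⁻¹ + (μ - β)⁻¹ := by positivity
    exact this.ne'
  have hlog := ((hu'.add hv').log hg)
  have hfun : fGC = fun p : ℝ × ℝ => Real.log ((p.2 + p.1)⁻¹ + (p.2 - p.1)⁻¹) := by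
    funext p; simp [fGC, one_div]
  rw [hfun]
  have heq : (-(((negGradGC ((β, μ) : ℝ × ℝ)).1 • ContinuousLinearMap.fst ℝ ℝ ℝ) +
      ((negGradGC ((β, μ) : ℝ × ℝ)).2 • ContinuousLinearMap.snd ℝ ℝ ℝ))) =
      ((((fun x => x⁻¹) ∘ fun p : ℝ × ℝ => p.2 + p.1) (β, μ) +
          ((fun x => x⁻¹) ∘ fun p : ℝ × ℝ => p.2 - p.1) (β, μ))⁻¹ •
        ((ContinuousLinearMap.smulRight (1 : ℝ →L[ℝ] ℝ) (-((((β, μ) : ℝ × ℝ).2 + ((β, μ) : ℝ × ℝ).1) ^ 2)⁻¹)).comp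
            (ContinuousLinearMap.snd ℝ ℝ ℝ + ContinuousLinearMap.fst ℝ ℝ ℝ) +
          (ContinuousLinearMap.smulRight (1 : ℝ →L[ℝ] ℝ) (-((((β, μ) : ℝ × ℝ).2 - ((β, μ) : ℝ × ℝ).1) ^ 2)⁻¹)).comp
            (ContinuousLinearMap.snd ℝ ℝ ℝ - ContinuousLinearMap.fst ℝ ℝ ℝ))) := by
    refine ContinuousLinearMap.ext fun q => ?_
    simp only [ContinuousLinearMap.add_apply, ContinuousLinearMap.smul_apply,
      ContinuousLinearMap.neg_apply, ContinuousLinearMap.coe_fst',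
      ContinuousLinearMap.coe_snd', ContinuousLinearMap.sub_apply,
      ContinuousLinearMap.comp_apply, ContinuousLinearMap.smulRight_apply,
      ContinuousLinearMap.one_apply, Function.comp_apply,
      smul_eq_mul, negGradGC]
    field_simp
    ring
  rw [heq]
  exact hlog

/-- On `A = {(β,μ): μ>0, |β|<μ}`, the derivative of `f` is given by `-negGradGC`
(so that `-∇f = negGradGC`), and `negGradGC` is a bijection from `A` onto `A`
with two-sided inverse `invGradGC`. -/
theorem negGrad_fGC_bijOn :
    (∀ p ∈ {p : ℝ × ℝ | 0 < p.2 ∧ |p.1| < p.2},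
        HasFDerivAt fGC
          (-(((negGradGC p).1 • ContinuousLinearMap.fst ℝ ℝ ℝ) +
              ((negGradGC p).2 • ContinuousLinearMap.snd ℝ ℝ ℝ))) p) ∧
    Set.BijOn negGradGC {p : ℝ × ℝ | 0 < p.2 ∧ |p.1| < p.2}
      {p : ℝ × ℝ | 0 < p.2 ∧ |p.1| < p.2} ∧
    Set.InvOn invGradGC negGradGC {p : ℝ × ℝ | 0 < p.2 ∧ |p.1| < p.2}
      {p : ℝ × ℝ | 0 < p.2 ∧ |p.1| < p.2} := by
  have hinv : Set.InvOn invGradGC negGradGC {p : ℝ × ℝ | 0 < p.2 ∧ |p.1| < p.2}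
      {p : ℝ × ℝ | 0 < p.2 ∧ |p.1| < p.2} :=
    ⟨fun p hp => left_inv p hp, fun q hq => right_inv q hq⟩
  exact ⟨deriv_lem, hinv.bijOn mapsTo_neg mapsTo_inv, hinv⟩
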